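/- arXiv:2011.12046 — 3 statements merged into one kernel-verified Lean document; each statement's English description precedes it below -/
import Mathlib

section
/- Let X be a real n×d matrix, let D be a d×d diagonal matrix each of whose diagonal entries is 1 or −1, let Φ be a d×r matrix with entries in {0,1} such that every row of Φ has exactly one nonzero entry and every column of Φ has at least one nonzero entry, and let S be the r×r diagonal matrix with S_jj = 1/(∑_{i=1}^d Φ_ij). Then the count-sketch reconstruction error ‖X − X·D·Φ·S·Φᵀ·Dᵀ‖_F² equals the k-means clustering objective ∑_{i=1}^d ‖M_{:,i} − c_{I(i)}‖₂² on the columns of M = X·D, where I(i) is the unique index j with Φ_ij = 1 (the cluster containing column i) and c_j is the mean of the columns {M_{:,i} : Φ_ij = 1} (the centroid of cluster j). -/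
open Matrix Finset

/-- Proposition 1: the count-sketch reconstruction error
`‖X − X·D·Φ·S·Φᵀ·Dᵀ‖_F²` equals the k-means objective on the columns of
`M = X·D`, where each column `i` belongs to the cluster `a i` (the unique `j`
with `Φ i j = 1`) and the center of cluster `j` is the arithmetic mean of the
columns of `M` assigned to it. -/
theorem countSketch_reconstruction_error_eq_kmeans_objective
    (n d r : ℕ)
    (X : Matrix (Fin n) (Fin d) ℝ)
    (s : Fin d → ℝ) (hs : ∀ i, s i = 1 ∨ s i = -1)
    (D : Matrix (Fin d) (Fin d) ℝ) (hD : D = Matrix.diagonal s)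
    (Φ : Matrix (Fin d) (Fin r) ℝ)
    (hΦ01 : ∀ i j, Φ i j = 0 ∨ Φ i j = 1)
    (a : Fin d → Fin r)
    (ha : ∀ i, Φ i (a i) = 1)
    (ha' : ∀ i j, Φ i j = 1 → j = a i)
    (hcol : ∀ j, ∃ i, Φ i j = 1)
    (S : Matrix (Fin r) (Fin r) ℝ)
    (hS : S = Matrix.diagonal (fun j => 1 / ∑ i, Φ i j))
    (M : Matrix (Fin n) (Fin d) ℝ) (hM : M = X * D)
    (c : Fin r → Fin n → ℝ)
    (hc : ∀ j k, c j k =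
      (∑ i ∈ Finset.univ.filter (fun i => Φ i j = 1), M k i) /
        ((Finset.univ.filter (fun i => Φ i j = 1)).card : ℝ)) :
    ∑ k, ∑ l, ((X - X * D * Φ * S * Φᵀ * Dᵀ) k l) ^ 2
      = ∑ i, ∑ k, (M k i - c (a i) k) ^ 2 := by
  have hss : ∀ l, s l * s l = 1 := by
    intro l; rcases hs l with h | h <;> rw [h] <;> norm_num
  have hΦif : ∀ i j, Φ i j = if j = a i then 1 else 0 := by
    intro i j
    by_cases h : j = a i
    · simp [h, ha]
    · rw [if_neg h]
      rcases hΦ01 i j with h0 | h1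
      · exact h0
      · exact absurd (ha' i j h1) h
  -- the entry of M Φ is the sum over the cluster
  have hMΦ : ∀ k j, (M * Φ) k j = ∑ i ∈ Finset.univ.filter (fun i => Φ i j = 1), M k i := by
    intro k j
    rw [Matrix.mul_apply, Finset.sum_filter]
    apply Finset.sum_congr rfl
    intro i _
    rcases hΦ01 i j with h0 | h1
    · simp [h0]
    · simp [h1]
  have hsumcard : ∀ j, (∑ i, Φ i j) = ((Finset.univ.filter (fun i => Φ i j = 1)).card : ℝ) := by
    intro j
    rw [Finset.card_filter]
    push_cast
    apply Finset.sum_congr rfl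
    intro i _
    rcases hΦ01 i j with h0 | h1
    · simp [h0]
    · simp [h1]
  -- entrywise identity
  have hentry : ∀ k l, (X - X * D * Φ * S * Φᵀ * Dᵀ) k l = (M k l - c (a l) k) * s l := by
    intro k l
    have hMkl : M k l = X k l * s l := by
      rw [hM, hD, Matrix.mul_diagonal]
    have hXkl : X k l = M k l * s l := by
      rw [hMkl, mul_assoc, hss, mul_one]
    have h1 : (X * D * Φ * S * Φᵀ * Dᵀ) k l = (M * Φ * S * Φᵀ) k l * s l := by
      rw [hD, Matrix.diagonal_transpose, Matrix.mul_diagonal, ← hD, ← hM]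
    have h2 : (M * Φ * S * Φᵀ) k l = (M * Φ * S) k (a l) := by
      rw [Matrix.mul_apply]
      have : ∀ j, (M * Φ * S) k j * Φᵀ j l = if j = a l then (M * Φ * S) k j else 0 := by
        intro j
        rw [Matrix.transpose_apply, hΦif l j]
        by_cases h : j = a l <;> simp [h]
      simp only [this]
      simp
    have h3 : (M * Φ * S) k (a l) = c (a l) k := by
      rw [hS, Matrix.mul_diagonal, hMΦ, hc, hsumcard, one_div, div_eq_mul_inv]
    rw [Matrix.sub_apply, h1, h2, h3, hXkl, ← sub_mul]
  calc ∑ k, ∑ l, ((X - X * D * Φ * S * Φᵀ * Dᵀ) k l) ^ 2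
      = ∑ k, ∑ l, (M k l - c (a l) k) ^ 2 := by
        apply Finset.sum_congr rfl; intro k _
        apply Finset.sum_congr rfl; intro l _
        rw [hentry, mul_pow, sq (s l), hss, mul_one]
    _ = ∑ i, ∑ k, (M k i - c (a i) k) ^ 2 := Finset.sum_comm
end

section
/- Let c ∈ ℝ^n with ‖c‖₁ > λ > 0, and suppose θ > 0 satisfies ∑_{i=1}^n max(0, |c_i| − θ) = λ. Define w* ∈ ℝ^n by w*_i = sign(c_i)·max(0, |c_i| − θ). Then w* is the unique minimizer of ‖w − c‖₂² over the L₁ ball {w ∈ ℝ^n : ‖w‖₁ ≤ λ}; that is, the soft-thresholded vector is the Euclidean projection of c onto the L₁ ball of radius λ. -/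
open Finset

/-- Soft-thresholding computes the Euclidean projection onto the `ℓ₁` ball:
if `‖c‖₁ > λ > 0` and `θ > 0` satisfies `∑ max(0, |c_i| − θ) = λ`, then
`w*_i = sign(c_i)·max(0, |c_i| − θ)` lies in the ball `{w : ‖w‖₁ ≤ λ}` and is
its unique minimizer of `‖w − c‖₂²`. -/
theorem soft_threshold_is_l1_ball_projection
    (n : ℕ) (c : Fin n → ℝ) (lam θ : ℝ)
    (hlam : 0 < lam) (hcl : lam < ∑ i, |c i|) (hθ : 0 < θ)
    (hθlam : ∑ i, max 0 (|c i| - θ) = lam)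
    (w : Fin n → ℝ)
    (hw : ∀ i, w i = Real.sign (c i) * max 0 (|c i| - θ)) :
    (∑ i, |w i|) ≤ lam ∧
      ∀ v : Fin n → ℝ, (∑ i, |v i|) ≤ lam → v ≠ w →
        ∑ i, (w i - c i) ^ 2 < ∑ i, (v i - c i) ^ 2 := by
  -- pointwise facts
  have habs : ∀ i, |w i| = max 0 (|c i| - θ) := by
    intro i
    rcases lt_trichotomy (c i) 0 with h | h | h
    · rw [hw i, Real.sign_of_neg h, abs_mul]
      simp [abs_of_nonneg (le_max_left 0 (|c i| - θ))]
    · rw [hw i, h]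
      simp only [Real.sign_zero, zero_mul, abs_zero, abs_zero, zero_sub]
      rw [eq_comm, max_eq_left]
      linarith
    · rw [hw i, Real.sign_of_pos h, abs_mul]
      simp [abs_of_nonneg (le_max_left 0 (|c i| - θ))]
  have hle : ∀ i, |c i - w i| ≤ θ := by
    intro i
    rcases le_or_gt (|c i|) θ with h | h
    · have h0 : max 0 (|c i| - θ) = 0 := max_eq_left (by linarith)
      rw [hw i, h0, mul_zero, sub_zero]
      linarith
    · have h0 : max 0 (|c i| - θ) = |c i| - θ := max_eq_right (by linarith)
      have hcne : c i ≠ 0 := by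
        intro hc; rw [hc] at h; simp at h; linarith
      rcases lt_or_gt_of_ne hcne with hneg | hpos
      · rw [hw i, h0, Real.sign_of_neg hneg, abs_of_neg hneg]
        rw [abs_le]; constructor <;> nlinarith
      · rw [hw i, h0, Real.sign_of_pos hpos, abs_of_pos hpos]
        rw [abs_le]; constructor <;> nlinarith
  have hkey : ∀ i, (c i - w i) * w i = θ * |w i| := by
    intro i
    rcases le_or_gt (|c i|) θ with h | h
    · have h0 : max 0 (|c i| - θ) = 0 := max_eq_left (by linarith)
      rw [hw i, h0]; simp
    · have h0 : max 0 (|c i| - θ) = |c i| - θ := max_eq_right (by linarith)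
      have hcne : c i ≠ 0 := by
        intro hc; rw [hc] at h; simp at h; linarith
      rcases lt_or_gt_of_ne hcne with hneg | hpos
      · rw [habs i, hw i, h0, Real.sign_of_neg hneg, abs_of_neg hneg]
        ring
      · rw [habs i, hw i, h0, Real.sign_of_pos hpos, abs_of_pos hpos]
        ring
  have hwnorm : ∑ i, |w i| = lam := by
    rw [← hθlam]; exact Finset.sum_congr rfl fun i _ => habs i
  refine ⟨hwnorm.le, fun v hv hne => ?_⟩
  -- cross term nonpositive
  have hcw : ∑ i, (c i - w i) * w i = θ * lam := by
    rw [← hwnorm, Finset.mul_sum]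
    exact Finset.sum_congr rfl fun i _ => hkey i
  have hcv : ∑ i, (c i - w i) * v i ≤ θ * lam := by
    calc ∑ i, (c i - w i) * v i ≤ ∑ i, θ * |v i| := by
          apply Finset.sum_le_sum
          intro i _
          calc (c i - w i) * v i ≤ |(c i - w i) * v i| := le_abs_self _
            _ = |c i - w i| * |v i| := abs_mul _ _
            _ ≤ θ * |v i| := mul_le_mul_of_nonneg_right (hle i) (abs_nonneg _)
      _ = θ * ∑ i, |v i| := (Finset.mul_sum _ _ _).symm
      _ ≤ θ * lam := mul_le_mul_of_nonneg_left hv hθ.le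
  have hcross : ∑ i, (c i - w i) * (v i - w i) ≤ 0 := by
    have : ∑ i, (c i - w i) * (v i - w i)
        = ∑ i, (c i - w i) * v i - ∑ i, (c i - w i) * w i := by
      rw [← Finset.sum_sub_distrib]
      exact Finset.sum_congr rfl fun i _ => by ring
    rw [this, hcw]; linarith
  -- positivity of the displacement
  have hpos : 0 < ∑ i, (v i - w i) ^ 2 := by
    obtain ⟨j, hj⟩ : ∃ j, v j ≠ w j := by
      by_contra h; push_neg at h; exact hne (funext h)
    apply Finset.sum_pos' (fun i _ => sq_nonneg _)
    exact ⟨j, Finset.mem_univ j, by have := sub_ne_zero.mpr hj; positivity⟩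
  -- expansion
  have expand : ∑ i, (v i - c i) ^ 2
      = ∑ i, (v i - w i) ^ 2 - 2 * ∑ i, (c i - w i) * (v i - w i)
        + ∑ i, (w i - c i) ^ 2 := by
    rw [Finset.mul_sum, ← Finset.sum_sub_distrib, ← Finset.sum_add_distrib]
    exact Finset.sum_congr rfl fun i _ => by ring
  linarith
end

section
/- (Johnson–Lindenstrauss) For every ε with 0 < ε < 1 and every finite set of n points x_1,…,x_n in ℝ^d, there exist a dimension r with r ≤ C·log(n)/ε² for an absolute constant C, and a linear map R : ℝ^d → ℝ^r, such that for all pairs i, j: (1−ε)·‖x_i − x_j‖₂ ≤ ‖R(x_i) − R(x_j)‖₂ ≤ (1+ε)·‖x_i − x_j‖₂. -/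
/-!
Project with `R = r^{-1/2} M` for a ±1 sign matrix `M`; probabilities are counts over the
`2^{dr}` sign matrices. For a unit vector `u`, `r ‖R u‖²` is a sum of `r` independent squares
`Y²` of Rademacher sums `Y = ∑ ±uᵢ`, with `𝔼 Y² = 1`. Chernoff bounds control both tails:
the upper one through `𝔼 exp (t Y²) ≤ (1 - 2t)^{-1/2}`, obtained by writing `exp (t Y²)` as a
Gaussian average of `exp (c x Y)` and using `cosh x ≤ exp (x² / 2)`; the lower one through
`exp (-z) ≤ 1 - z + z²` and `𝔼 Y⁴ ≤ 3`. So a fixed distance is distorted by more than `1 ± ε`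
with probability at most `2 exp (-r ε² / 16)`, and for `r = ⌈64 log n / ε²⌉` a union bound over
the `n²` pairs leaves a sign matrix that works for all of them.
-/

open Finset Real MeasureTheory

namespace JohnsonLindenstrauss

noncomputable def boolSign (b : Bool) : ℝ := if b then 1 else -1

noncomputable def rademacherSum {d : ℕ} (v : Fin d → ℝ) (τ : Fin d → Bool) : ℝ :=
  ∑ i, boolSign (τ i) * v i

lemma exp_mul_sub_sq_div_two_eq (m x : ℝ) :
    exp (m * x - x ^ 2 / 2) = exp (m ^ 2 / 2) * exp (-(1 / 2) * (x - m) ^ 2) := by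
  rw [← exp_add]; ring_nf

lemma integrable_exp_mul_sub_sq_div_two (m : ℝ) :
    Integrable fun x => exp (m * x - x ^ 2 / 2) := by
  simp_rw [exp_mul_sub_sq_div_two_eq]
  exact ((integrable_exp_neg_mul_sq (by norm_num)).comp_sub_right m).const_mul _

lemma integral_exp_mul_sub_sq_div_two (m : ℝ) :
    ∫ x, exp (m * x - x ^ 2 / 2) = √(2 * π) * exp (m ^ 2 / 2) := by
  simp_rw [exp_mul_sub_sq_div_two_eq]
  rw [integral_const_mul, integral_sub_right_eq_self (fun x => exp (-(1 / 2) * x ^ 2)),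
    integral_gaussian, mul_comm]
  norm_num [div_div_eq_mul_div, mul_comm]

lemma exp_neg_le_inv_one_add {w : ℝ} (hw : -1 < w) : exp (-w) ≤ (1 + w)⁻¹ := by
  rw [exp_neg]
  exact inv_anti₀ (by linarith) (by linarith [add_one_le_exp w])

lemma exp_neg_le_one_sub_add_sq {z : ℝ} (hz : 0 ≤ z) : exp (-z) ≤ 1 - z + z ^ 2 := by
  refine (exp_neg_le_inv_one_add (by linarith)).trans ?_
  rw [inv_le_iff_one_le_mul₀' (by positivity)]
  nlinarith [pow_nonneg hz 3]

lemma inv_sqrt_one_sub_two_mul_le_exp {t : ℝ} (ht : t ≤ 1 / 4) :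
    (√(1 - 2 * t))⁻¹ ≤ exp (t + 4 * t ^ 2) := by
  have hw : exp (-(2 * t + 8 * t ^ 2)) ≤ 1 - 2 * t := by
    have hpos : 0 < 1 + (2 * t + 8 * t ^ 2) := by nlinarith [sq_nonneg (t + 1 / 8)]
    refine (exp_neg_le_inv_one_add (by linarith)).trans ?_
    rw [inv_le_iff_one_le_mul₀' hpos]
    nlinarith [mul_nonneg (sq_nonneg t) (by linarith : 0 ≤ 1 - 4 * t)]
  rw [inv_le_comm₀ (sqrt_pos.2 (by linarith)) (exp_pos _), ← exp_neg,
    le_sqrt (exp_nonneg _) (by linarith), ← exp_nat_mul]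
  convert hw using 2
  push_cast; ring

section Rademacher

variable {d : ℕ}

lemma sum_exp_mul_rademacherSum_le (v : Fin d → ℝ) (s : ℝ) :
    ∑ τ, exp (s * rademacherSum v τ) ≤ 2 ^ d * exp (s ^ 2 / 2 * ∑ i, v i ^ 2) := by
  calc ∑ τ, exp (s * rademacherSum v τ)
      = ∏ i, ∑ b, exp (s * v i * boolSign b) := by
        rw [prod_univ_sum, Fintype.piFinset_univ]
        refine sum_congr rfl fun τ _ => ?_
        rw [← exp_sum, rademacherSum, mul_sum]
        exact congrArg exp (sum_congr rfl fun i _ => by ring)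
    _ = ∏ i, 2 * cosh (s * v i) := by
        simp only [Fintype.sum_bool, boolSign, if_true, Bool.false_eq_true, if_false, cosh_eq]
        refine prod_congr rfl fun i _ => ?_
        rw [mul_one, mul_neg_one]
        ring
    _ ≤ ∏ i, 2 * exp ((s * v i) ^ 2 / 2) :=
        prod_le_prod (fun i _ => by positivity) fun i _ => by
          gcongr; exact cosh_le_exp_half_sq _
    _ = 2 ^ d * exp (s ^ 2 / 2 * ∑ i, v i ^ 2) := by
        rw [prod_mul_distrib, prod_const, card_univ, Fintype.card_fin, ← exp_sum, mul_sum]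
        exact congrArg (2 ^ d * exp ·) (sum_congr rfl fun i _ => by ring)

lemma sum_const_bool_fun (c : ℝ) : ∑ _τ : Fin d → Bool, c = 2 ^ d * c := by
  simp

lemma sum_fin_succ_bool (F : (Fin (d + 1) → Bool) → ℝ) :
    ∑ τ, F τ = ∑ τ : Fin d → Bool, (F (Fin.cons true τ) + F (Fin.cons false τ)) := by
  rw [← (Fin.consEquiv fun _ => Bool).sum_comp, Fintype.sum_prod_type, Fintype.sum_bool,
    ← sum_add_distrib]
  rfl

lemma rademacherSum_cons (v : Fin (d + 1) → ℝ) (b : Bool) (τ : Fin d → Bool) :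
    rademacherSum v (Fin.cons b τ) = boolSign b * v 0 + rademacherSum (Fin.tail v) τ := by
  simp [rademacherSum, Fin.sum_univ_succ, Fin.tail]

lemma sum_rademacherSum_sq (v : Fin d → ℝ) :
    ∑ τ, rademacherSum v τ ^ 2 = 2 ^ d * ∑ i, v i ^ 2 := by
  induction d with
  | zero => simp [rademacherSum]
  | succ d ih =>
    simp only [sum_fin_succ_bool, rademacherSum_cons, boolSign, if_true, Bool.false_eq_true,
      if_false]
    calc ∑ τ, ((1 * v 0 + rademacherSum (Fin.tail v) τ) ^ 2
          + (-1 * v 0 + rademacherSum (Fin.tail v) τ) ^ 2)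
        = ∑ τ, (2 * rademacherSum (Fin.tail v) τ ^ 2 + 2 * v 0 ^ 2) :=
          sum_congr rfl fun τ _ => by ring
      _ = 2 * ∑ τ, rademacherSum (Fin.tail v) τ ^ 2 + 2 ^ (d + 1) * v 0 ^ 2 := by
          rw [sum_add_distrib, ← mul_sum, sum_const_bool_fun]
          ring
      _ = 2 ^ (d + 1) * ∑ i, v i ^ 2 := by
          rw [ih, Fin.sum_univ_succ]; simp only [Fin.tail]; ring

lemma sum_rademacherSum_pow_four_le (v : Fin d → ℝ) :
    ∑ τ, rademacherSum v τ ^ 4 ≤ 3 * 2 ^ d * (∑ i, v i ^ 2) ^ 2 := by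
  induction d with
  | zero => simp [rademacherSum]
  | succ d ih =>
    simp only [sum_fin_succ_bool, rademacherSum_cons, boolSign, if_true, Bool.false_eq_true,
      if_false]
    set q := ∑ i, Fin.tail v i ^ 2
    calc ∑ τ, ((1 * v 0 + rademacherSum (Fin.tail v) τ) ^ 4
          + (-1 * v 0 + rademacherSum (Fin.tail v) τ) ^ 4)
        = ∑ τ, (2 * rademacherSum (Fin.tail v) τ ^ 4
            + 12 * v 0 ^ 2 * rademacherSum (Fin.tail v) τ ^ 2 + 2 * v 0 ^ 4) :=
          sum_congr rfl fun τ _ => by ring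
      _ = 2 * ∑ τ, rademacherSum (Fin.tail v) τ ^ 4 + 12 * v 0 ^ 2 * (2 ^ d * q)
            + 2 ^ (d + 1) * v 0 ^ 4 := by
          rw [sum_add_distrib, sum_add_distrib, ← mul_sum, ← mul_sum, sum_rademacherSum_sq,
            sum_const_bool_fun]
          ring
      _ ≤ 2 * (3 * 2 ^ d * q ^ 2) + 12 * v 0 ^ 2 * (2 ^ d * q) + 2 ^ (d + 1) * v 0 ^ 4 := by
          gcongr; exact ih _
      _ ≤ 3 * 2 ^ (d + 1) * (v 0 ^ 2 + q) ^ 2 := by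
          have : 0 ≤ 2 ^ d * v 0 ^ 4 := by positivity
          rw [pow_succ (2 : ℝ) d]; nlinarith
      _ = 3 * 2 ^ (d + 1) * (∑ i, v i ^ 2) ^ 2 := by rw [Fin.sum_univ_succ]; rfl

lemma sum_exp_mul_rademacherSum_sq_le {v : Fin d → ℝ} (hv : ∑ i, v i ^ 2 = 1) {t : ℝ}
    (ht0 : 0 ≤ t) (ht : t < 1 / 2) :
    ∑ τ, exp (t * rademacherSum v τ ^ 2) ≤ 2 ^ d / √(1 - 2 * t) := by
  set c := √(2 * t)
  have hc : c ^ 2 = 2 * t := sq_sqrt (by linarith)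
  -- Hubbard–Stratonovich: `exp (t a²)` is the Gaussian average of `exp (c a x)`.
  have hrep (a : ℝ) : exp (t * a ^ 2) = (√(2 * π))⁻¹ * ∫ x, exp (c * a * x - x ^ 2 / 2) := by
    rw [integral_exp_mul_sub_sq_div_two, inv_mul_cancel_left₀ (by positivity), mul_pow, hc]
    ring_nf
  have hpointwise (x : ℝ) :
      ∑ τ, exp (c * rademacherSum v τ * x - x ^ 2 / 2) ≤ 2 ^ d * exp (-(1 / 2 - t) * x ^ 2) := by
    calc ∑ τ, exp (c * rademacherSum v τ * x - x ^ 2 / 2)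
        = (∑ τ, exp (c * x * rademacherSum v τ)) * exp (-(x ^ 2 / 2)) := by
          rw [sum_mul]
          exact sum_congr rfl fun τ _ => by rw [← exp_add]; ring_nf
      _ ≤ 2 ^ d * exp ((c * x) ^ 2 / 2 * ∑ i, v i ^ 2) * exp (-(x ^ 2 / 2)) := by
          gcongr; exact sum_exp_mul_rademacherSum_le v _
      _ = 2 ^ d * exp (-(1 / 2 - t) * x ^ 2) := by
          rw [hv, mul_assoc, ← exp_add, mul_pow, hc]; ring_nf
  calc ∑ τ, exp (t * rademacherSum v τ ^ 2)
      = (√(2 * π))⁻¹ * ∫ x, ∑ τ, exp (c * rademacherSum v τ * x - x ^ 2 / 2) := by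
        rw [integral_finsetSum _ fun τ _ => integrable_exp_mul_sub_sq_div_two _, mul_sum]
        exact sum_congr rfl fun τ _ => hrep _
    _ ≤ (√(2 * π))⁻¹ * ∫ x, 2 ^ d * exp (-(1 / 2 - t) * x ^ 2) := by
        gcongr
        · exact integrable_finsetSum _ fun τ _ => integrable_exp_mul_sub_sq_div_two _
        · exact (integrable_exp_neg_mul_sq (by linarith)).const_mul _
        · exact hpointwise
    _ = 2 ^ d / √(1 - 2 * t) := by
        rw [integral_const_mul, integral_gaussian,
          show π / (1 / 2 - t) = 2 * π / (1 - 2 * t) by field_simp,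
          sqrt_div (by positivity)]
        field_simp

lemma sum_exp_neg_mul_rademacherSum_sq_le {v : Fin d → ℝ} (hv : ∑ i, v i ^ 2 = 1) {t : ℝ}
    (ht0 : 0 ≤ t) :
    ∑ τ, exp (-(t * rademacherSum v τ ^ 2)) ≤ 2 ^ d * exp (-t + 3 * t ^ 2) := by
  have h4 := sum_rademacherSum_pow_four_le v
  rw [hv] at h4
  calc ∑ τ, exp (-(t * rademacherSum v τ ^ 2))
      ≤ ∑ τ, (1 - t * rademacherSum v τ ^ 2 + t ^ 2 * rademacherSum v τ ^ 4) :=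
        sum_le_sum fun τ _ => (exp_neg_le_one_sub_add_sq (by positivity)).trans_eq (by ring)
    _ = 2 ^ d - t * 2 ^ d + t ^ 2 * ∑ τ, rademacherSum v τ ^ 4 := by
        rw [sum_add_distrib, sum_sub_distrib, ← mul_sum, ← mul_sum, sum_rademacherSum_sq, hv,
          sum_const_bool_fun]
        ring
    _ ≤ 2 ^ d * (1 + (-t + 3 * t ^ 2)) := by nlinarith [sq_nonneg t]
    _ ≤ 2 ^ d * exp (-t + 3 * t ^ 2) := by
        gcongr; linarith [add_one_le_exp (-t + 3 * t ^ 2)]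

end Rademacher

lemma card_filter_le_exp_neg_mul_sum_exp {Ω : Type*} [Fintype Ω] (g : Ω → ℝ) (c : ℝ) :
    (#{ω | c ≤ g ω} : ℝ) ≤ exp (-c) * ∑ ω, exp (g ω) := by
  calc (#{ω | c ≤ g ω} : ℝ) = ∑ ω ∈ {ω | c ≤ g ω}, 1 := by simp
    _ ≤ ∑ ω ∈ {ω | c ≤ g ω}, exp (g ω - c) :=
        sum_le_sum fun ω hω => one_le_exp (sub_nonneg.2 (mem_filter.1 hω).2)
    _ ≤ ∑ ω, exp (g ω - c) :=
        sum_le_sum_of_subset_of_nonneg (subset_univ _) fun _ _ _ => by positivity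
    _ = exp (-c) * ∑ ω, exp (g ω) := by
        rw [mul_sum]; exact sum_congr rfl fun ω _ => by rw [← exp_add]; ring_nf

lemma sum_exp_sum_eq_pow {α : Type*} [Fintype α] (g : α → ℝ) (r : ℕ) :
    ∑ σ : Fin r → α, exp (∑ k, g (σ k)) = (∑ a, exp (g a)) ^ r := by
  rw [sum_pow', Fintype.piFinset_univ]
  simp only [exp_sum]

section Tails

variable {r d : ℕ} {u : Fin d → ℝ} {ε : ℝ}

lemma card_upper_tail_sum_sq_rademacherSum_le (hu : ∑ i, u i ^ 2 = 1) (hε0 : 0 ≤ ε) (hε : ε ≤ 2) :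
    (#{σ : Fin r → Fin d → Bool | (1 + ε) * r ≤ ∑ k, rademacherSum u (σ k) ^ 2} : ℝ)
      ≤ (2 ^ d) ^ r * exp (-(r * ε ^ 2 / 16)) := by
  set t := ε / 8 with ht
  calc (#{σ : Fin r → Fin d → Bool | (1 + ε) * r ≤ ∑ k, rademacherSum u (σ k) ^ 2} : ℝ)
      ≤ #{σ : Fin r → Fin d → Bool | t * ((1 + ε) * r) ≤ ∑ k, t * rademacherSum u (σ k) ^ 2} := by
        refine mod_cast card_le_card (monotone_filter_right _ fun σ _ h => ?_)
        rw [← mul_sum]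
        exact mul_le_mul_of_nonneg_left h (by positivity)
    _ ≤ exp (-(t * ((1 + ε) * r))) * (∑ τ, exp (t * rademacherSum u τ ^ 2)) ^ r := by
        rw [← sum_exp_sum_eq_pow]
        exact card_filter_le_exp_neg_mul_sum_exp _ _
    _ ≤ exp (-(t * ((1 + ε) * r))) * (2 ^ d * exp (t + 4 * t ^ 2)) ^ r := by
        gcongr
        calc _ ≤ 2 ^ d / √(1 - 2 * t) :=
              sum_exp_mul_rademacherSum_sq_le hu (by positivity) (by linarith [ht])
          _ ≤ 2 ^ d * exp (t + 4 * t ^ 2) := by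
              rw [div_eq_mul_inv]
              gcongr
              exact inv_sqrt_one_sub_two_mul_le_exp (by linarith [ht])
    _ = (2 ^ d) ^ r * exp (-(r * ε ^ 2 / 16)) := by
        rw [mul_pow, ← exp_nat_mul, mul_left_comm, ← exp_add, ht]
        ring_nf

lemma card_lower_tail_sum_sq_rademacherSum_le (hu : ∑ i, u i ^ 2 = 1) (hε0 : 0 ≤ ε) :
    (#{σ : Fin r → Fin d → Bool | ∑ k, rademacherSum u (σ k) ^ 2 ≤ (1 - ε) * r} : ℝ)
      ≤ (2 ^ d) ^ r * exp (-(r * ε ^ 2 / 16)) := by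
  set t := ε / 8 with ht
  calc (#{σ : Fin r → Fin d → Bool | ∑ k, rademacherSum u (σ k) ^ 2 ≤ (1 - ε) * r} : ℝ)
      ≤ #{σ : Fin r → Fin d → Bool |
          -(t * ((1 - ε) * r)) ≤ ∑ k, -(t * rademacherSum u (σ k) ^ 2)} := by
        refine mod_cast card_le_card (monotone_filter_right _ fun σ _ h => ?_)
        rw [sum_neg_distrib, ← mul_sum, neg_le_neg_iff]
        exact mul_le_mul_of_nonneg_left h (by positivity)
    _ ≤ exp (t * ((1 - ε) * r)) * (∑ τ, exp (-(t * rademacherSum u τ ^ 2))) ^ r := by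
        rw [← sum_exp_sum_eq_pow]
        simpa only [neg_neg] using card_filter_le_exp_neg_mul_sum_exp
          (fun σ : Fin r → Fin d → Bool => ∑ k, -(t * rademacherSum u (σ k) ^ 2))
          (-(t * ((1 - ε) * r)))
    _ ≤ exp (t * ((1 - ε) * r)) * (2 ^ d * exp (-t + 3 * t ^ 2)) ^ r := by
        gcongr
        exact sum_exp_neg_mul_rademacherSum_sq_le hu (by positivity)
    _ = (2 ^ d) ^ r * exp (-(r * ε ^ 2 / 16) - r * (ε ^ 2 / 64)) := by
        rw [mul_pow, ← exp_nat_mul, mul_left_comm, ← exp_add, ht]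
        ring_nf
    _ ≤ (2 ^ d) ^ r * exp (-(r * ε ^ 2 / 16)) := by
        gcongr
        linarith [show 0 ≤ (r : ℝ) * (ε ^ 2 / 64) by positivity]

end Tails

noncomputable def signProjection {r d : ℕ} (σ : Fin r → Fin d → Bool) :
    EuclideanSpace ℝ (Fin d) →ₗ[ℝ] EuclideanSpace ℝ (Fin r) :=
  Matrix.toLpLin 2 2 (Matrix.of fun k i => (√r)⁻¹ * boolSign (σ k i))

section Projection

variable {r d : ℕ} {ε : ℝ}

lemma norm_signProjection_sq (σ : Fin r → Fin d → Bool) (v : EuclideanSpace ℝ (Fin d)) :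
    ‖signProjection σ v‖ ^ 2 = (∑ k, rademacherSum v.ofLp (σ k) ^ 2) / r := by
  rw [EuclideanSpace.real_norm_sq_eq, sum_div]
  refine sum_congr rfl fun k _ => ?_
  simp only [signProjection, Matrix.toLpLin_apply, PiLp.toLp_apply, Matrix.mulVec, dotProduct,
    Matrix.of_apply, mul_assoc, ← mul_sum, rademacherSum]
  rw [mul_pow, inv_pow, sq_sqrt (Nat.cast_nonneg r), div_eq_inv_mul]

lemma card_norm_signProjection_notMem_Icc_le_of_norm_eq_one {u : EuclideanSpace ℝ (Fin d)}
    (hu : ‖u‖ = 1) (hε0 : 0 ≤ ε) (hε1 : ε ≤ 1) :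
    (#{σ : Fin r → Fin d → Bool | ‖signProjection σ u‖ ∉ Set.Icc (1 - ε) (1 + ε)} : ℝ)
      ≤ 2 * ((2 ^ d) ^ r * exp (-(r * ε ^ 2 / 16))) := by
  have hu' : ∑ i, u.ofLp i ^ 2 = 1 := by rw [← EuclideanSpace.real_norm_sq_eq, hu, one_pow]
  set S := fun σ : Fin r → Fin d → Bool => ∑ k, rademacherSum u.ofLp (σ k) ^ 2
  have hdev (σ : Fin r → Fin d → Bool)
      (h : ‖signProjection σ u‖ ∉ Set.Icc (1 - ε) (1 + ε)) :
      S σ ≤ (1 - ε) * r ∨ (1 + ε) * r ≤ S σ := by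
    contrapose! h
    obtain ⟨hlo, hhi⟩ := h
    have hr : (0 : ℝ) < r := by nlinarith
    have hsq : ‖signProjection σ u‖ ^ 2 = S σ / r := norm_signProjection_sq σ u
    have hlo' : 1 - ε < ‖signProjection σ u‖ ^ 2 := by rw [hsq, lt_div_iff₀ hr]; exact hlo
    have hhi' : ‖signProjection σ u‖ ^ 2 < 1 + ε := by rw [hsq, div_lt_iff₀ hr]; exact hhi
    have := norm_nonneg (signProjection σ u)
    constructor <;> nlinarith
  calc _ ≤ (#{σ | S σ ≤ (1 - ε) * r ∨ (1 + ε) * r ≤ S σ} : ℝ) :=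
        mod_cast card_le_card (monotone_filter_right _ fun σ _ => hdev σ)
    _ ≤ #{σ | S σ ≤ (1 - ε) * r} + #{σ | (1 + ε) * r ≤ S σ} := by
        rw [filter_or]; exact mod_cast card_union_le _ _
    _ ≤ _ := by
        linarith [card_lower_tail_sum_sq_rademacherSum_le (r := r) hu' hε0,
          card_upper_tail_sum_sq_rademacherSum_le (r := r) hu' hε0 (by linarith)]

lemma card_norm_signProjection_notMem_Icc_le (v : EuclideanSpace ℝ (Fin d)) (hε0 : 0 ≤ ε)
    (hε1 : ε ≤ 1) :
    (#{σ : Fin r → Fin d → Bool |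
        ‖signProjection σ v‖ ∉ Set.Icc ((1 - ε) * ‖v‖) ((1 + ε) * ‖v‖)} : ℝ)
      ≤ 2 * ((2 ^ d) ^ r * exp (-(r * ε ^ 2 / 16))) := by
  rcases eq_or_ne v 0 with rfl | hv
  · simp only [map_zero, norm_zero, mul_zero, Set.left_mem_Icc, le_refl, not_true_eq_false,
      filter_false, card_empty, Nat.cast_zero]
    positivity
  have hv' : 0 < ‖v‖ := norm_pos_iff.2 hv
  have hscale (σ : Fin r → Fin d → Bool) :
      ‖signProjection σ v‖ = ‖signProjection σ (‖v‖⁻¹ • v)‖ * ‖v‖ := by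
    rw [map_smul, norm_smul, norm_inv, norm_norm, mul_comm ‖v‖⁻¹, inv_mul_cancel_right₀ hv'.ne']
  calc _ = (#{σ : Fin r → Fin d → Bool |
          ‖signProjection σ (‖v‖⁻¹ • v)‖ ∉ Set.Icc (1 - ε) (1 + ε)} : ℝ) := by
        simp only [Set.mem_Icc, hscale, mul_le_mul_iff_left₀ hv']
    _ ≤ _ := card_norm_signProjection_notMem_Icc_le_of_norm_eq_one (norm_smul_inv_norm hv) hε0 hε1

end Projection

lemma exists_forall_notMem_of_sum_card_lt {ι Ω : Type*} [Fintype ι] [Fintype Ω]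
    (B : ι → Finset Ω) (h : ∑ i, #(B i) < Fintype.card Ω) : ∃ ω, ∀ i, ω ∉ B i := by
  classical
  by_contra! hB
  have hcover : (univ : Finset Ω) ⊆ univ.biUnion B := fun ω _ => by simpa using hB ω
  exact (card_le_card hcover |>.trans card_biUnion_le).not_gt (by simpa using h)

lemma exists_signProjection_mem_Icc {n r d : ℕ} {ε : ℝ}
    (x : Fin n → EuclideanSpace ℝ (Fin d)) (hε0 : 0 ≤ ε) (hε1 : ε ≤ 1)
    (hr : 2 * n ^ 2 * exp (-(r * ε ^ 2 / 16)) < 1) :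
    ∃ σ : Fin r → Fin d → Bool, ∀ i j,
      ‖signProjection σ (x i - x j)‖ ∈ Set.Icc ((1 - ε) * ‖x i - x j‖) ((1 + ε) * ‖x i - x j‖) := by
  set B := fun p : Fin n × Fin n => ({σ : Fin r → Fin d → Bool |
    ‖signProjection σ (x p.1 - x p.2)‖ ∉
      Set.Icc ((1 - ε) * ‖x p.1 - x p.2‖) ((1 + ε) * ‖x p.1 - x p.2‖)} : Finset _)
  have hcard : (∑ p, #(B p) : ℝ) < Fintype.card (Fin r → Fin d → Bool) :=
    calc (∑ p, #(B p) : ℝ) ≤ ∑ _p : Fin n × Fin n, 2 * ((2 ^ d) ^ r * exp (-(r * ε ^ 2 / 16))) :=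
          sum_le_sum fun p _ => card_norm_signProjection_notMem_Icc_le _ hε0 hε1
      _ = (2 ^ d) ^ r * (2 * n ^ 2 * exp (-(r * ε ^ 2 / 16))) := by
          rw [sum_const, card_univ, Fintype.card_prod, Fintype.card_fin, nsmul_eq_mul]
          push_cast
          ring
      _ < (2 ^ d) ^ r := mul_lt_of_lt_one_right (by positivity) hr
      _ = Fintype.card (Fin r → Fin d → Bool) := by simp
  obtain ⟨σ, hσ⟩ := exists_forall_notMem_of_sum_card_lt B (mod_cast hcard)
  exact ⟨σ, fun i j => by simpa [B] using hσ (i, j)⟩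

lemma natCeil_mul_log_div_sq_le {n : ℕ} (hn : 2 ≤ n) {ε : ℝ} (hε0 : 0 < ε) (hε1 : ε < 1) :
    (⌈64 * log n / ε ^ 2⌉₊ : ℝ) ≤ 128 * log n / ε ^ 2 := by
  have hlog : log 2 ≤ log n := log_le_log (by norm_num) (by exact_mod_cast hn)
  have hε2 : ε ^ 2 ≤ 1 := by nlinarith
  have : 2⁻¹ ≤ 64 * log n / ε ^ 2 := by
    rw [le_div_iff₀ (by positivity)]
    linarith [log_two_gt_d9]
  calc (⌈64 * log n / ε ^ 2⌉₊ : ℝ) ≤ 2 * (64 * log n / ε ^ 2) := Nat.ceil_le_two_mul this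
    _ = 128 * log n / ε ^ 2 := by ring

lemma two_mul_sq_mul_exp_lt_one {n r : ℕ} (hn : 2 ≤ n) {ε : ℝ} (hε : 0 < ε)
    (hr : 64 * log n / ε ^ 2 ≤ r) : 2 * n ^ 2 * exp (-(r * ε ^ 2 / 16)) < 1 := by
  have hn' : (2 : ℝ) ≤ n := by exact_mod_cast hn
  have hrε : log ((n : ℝ) ^ 4) ≤ r * ε ^ 2 / 16 := by
    rw [div_le_iff₀ (by positivity)] at hr
    rw [log_pow]; push_cast; linarith
  calc (2 : ℝ) * n ^ 2 * exp (-(r * ε ^ 2 / 16))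
      ≤ 2 * n ^ 2 * exp (-log ((n : ℝ) ^ 4)) := by gcongr
    _ = 2 / (n : ℝ) ^ 2 := by
        rw [exp_neg, exp_log (by positivity)]; field_simp
    _ < 1 := by rw [div_lt_one (by positivity)]; nlinarith

end JohnsonLindenstrauss

open JohnsonLindenstrauss in
/-- Johnson–Lindenstrauss lemma (existential form): there is an absolute
constant `C` such that for every `0 < ε < 1` and every finite family of `n`
points in `ℝ^d`, some linear map into `ℝ^r` with `r ≤ C·log n / ε²` preserves
all pairwise distances up to a factor `1 ± ε`. -/
theorem johnson_lindenstrauss_existential :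
    ∃ C : ℝ, 0 < C ∧
      ∀ (ε : ℝ), 0 < ε → ε < 1 →
        ∀ (n d : ℕ) (x : Fin n → EuclideanSpace ℝ (Fin d)),
          ∃ (r : ℕ) (R : EuclideanSpace ℝ (Fin d) →ₗ[ℝ]
              EuclideanSpace ℝ (Fin r)),
            (r : ℝ) ≤ C * Real.log n / ε ^ 2 ∧
            ∀ i j : Fin n,
              (1 - ε) * ‖x i - x j‖ ≤ ‖R (x i) - R (x j)‖ ∧
              ‖R (x i) - R (x j)‖ ≤ (1 + ε) * ‖x i - x j‖ := by
  refine ⟨128, by norm_num, fun ε hε0 hε1 n d x => ?_⟩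
  rcases lt_or_ge n 2 with hn | hn
  · have : Subsingleton (Fin n) := Fin.subsingleton_iff_le_one.2 (by omega)
    refine ⟨0, 0, ?_, fun i j => by simp [Subsingleton.elim i j]⟩
    interval_cases n <;> simp
  · obtain ⟨σ, hσ⟩ := exists_signProjection_mem_Icc x hε0.le hε1.le
      (two_mul_sq_mul_exp_lt_one hn hε0 (Nat.le_ceil _))
    exact ⟨_, signProjection σ, natCeil_mul_log_div_sq_le hn hε0 hε1,
      fun i j => by simpa only [map_sub, Set.mem_Icc] using hσ i j⟩
end
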